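/- Let $k \in \mathbb{N}$, let $A, B \in \mathbb{R}^{k \times k}$ be symmetric positive definite matrices, and let $e : \mathbb{R} \to \mathbb{R}^k$ be a twice continuously differentiable function satisfying $e''(t) + A e'(t) + B e(t) = 0$ for all $t \geq 0$. Then $e(t) \to 0$ and $e'(t) \to 0$ as $t \to \infty$. -/

import Mathlib

/-!
The perturbed energy `V = ‖e'‖² + ⟪e, B e⟫ + ε ⟪e, e'⟫` is a strict Lyapunov function for
`e'' + A e' + B e = 0`. The energy alone only dissipates `-2⟪e', A e'⟫`, which does not control
`e`; the small cross term contributes `-ε ⟪e, B e⟫` to `V'`, and for `ε` small enough `V` stays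
comparable to `‖e‖² + ‖e'‖²` while `V' ≤ -c V`. Hence `V`, and with it `‖e‖² + ‖e'‖²`, decays
exponentially. In finite dimension, positivity of `x ↦ ⟪x, T x⟫` on the unit sphere gives the
coercivity constants by compactness.
-/

open Matrix Filter

open scoped RealInnerProductSpace Topology

theorem ContinuousLinearMap.exists_coercive_of_inner_map_self_pos {E : Type*}
    [NormedAddCommGroup E] [InnerProductSpace ℝ E] [FiniteDimensional ℝ E] (T : E →L[ℝ] E)
    (hT : ∀ x, x ≠ 0 → 0 < ⟪x, T x⟫) : ∃ α > 0, ∀ x, α * ‖x‖ ^ 2 ≤ ⟪x, T x⟫ := by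
  rcases subsingleton_or_nontrivial E with hE | hE
  · exact ⟨1, one_pos, fun x => by simp [Subsingleton.elim x 0]⟩
  obtain ⟨z, hz, hmin⟩ := (isCompact_sphere (0 : E) 1).exists_isMinOn
    (NormedSpace.sphere_nonempty.mpr zero_le_one)
    (by fun_prop : Continuous fun x => ⟪x, T x⟫).continuousOn
  refine ⟨⟪z, T z⟫, hT z (ne_zero_of_mem_sphere one_ne_zero ⟨z, hz⟩), fun x => ?_⟩
  rcases eq_or_ne x 0 with rfl | hx
  · simp
  have hunit : ‖x‖⁻¹ • x ∈ Metric.sphere (0 : E) 1 := by simp [norm_smul, hx]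
  have hzx : ⟪z, T z⟫ ≤ ‖x‖⁻¹ * (‖x‖⁻¹ * ⟪x, T x⟫) := by
    simpa [real_inner_smul_left, real_inner_smul_right] using hmin hunit
  calc ⟪z, T z⟫ * ‖x‖ ^ 2 ≤ ‖x‖⁻¹ * (‖x‖⁻¹ * ⟪x, T x⟫) * ‖x‖ ^ 2 := by gcongr
    _ = ⟪x, T x⟫ := by field_simp

theorem le_mul_exp_of_hasDerivAt_le_neg_mul {f f' : ℝ → ℝ} {c : ℝ}
    (hf : ∀ t ≥ 0, HasDerivAt f (f' t) t) (hbound : ∀ t ≥ 0, f' t ≤ -c * f t) {t : ℝ}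
    (ht : 0 ≤ t) : f t ≤ f 0 * Real.exp (-c * t) := by
  have := le_gronwallBound_of_liminf_deriv_right_le (δ := f 0) (K := -c) (ε := 0)
    (fun s hs => (hf s hs.1).continuousAt.continuousWithinAt)
    (fun s hs r hr => (hf s hs.1).hasDerivWithinAt.liminf_right_slope_le hr) le_rfl
    (fun s hs => by simpa using hbound s hs.1) t ⟨ht, le_rfl⟩
  simpa [gronwallBound_ε0] using this

theorem tendsto_zero_of_sq_norm_le {ι E : Type*} [SeminormedAddCommGroup E] {l : Filter ι}
    {f : ι → E} {g : ι → ℝ} (hfg : ∀ᶠ i in l, ‖f i‖ ^ 2 ≤ g i) (hg : Tendsto g l (𝓝 0)) :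
    Tendsto f l (𝓝 0) := by
  rw [tendsto_zero_iff_norm_tendsto_zero]
  refine squeeze_zero' (Eventually.of_forall fun i => norm_nonneg _) ?_ (by simpa using hg.sqrt)
  filter_upwards [hfg] with i hi
  simpa using Real.abs_le_sqrt hi

namespace DampedOscillator

variable {E : Type*} [NormedAddCommGroup E] [InnerProductSpace ℝ E] (A B : E →L[ℝ] E) (ε : ℝ)

def perturbedEnergy (u w : E) : ℝ := ‖w‖ ^ 2 + ⟪u, B u⟫ + ε * ⟪u, w⟫

def perturbedEnergyDeriv (u w : E) : ℝ :=
  -2 * ⟪w, A w⟫ + ε * ‖w‖ ^ 2 - ε * ⟪u, A w⟫ - ε * ⟪u, B u⟫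

variable {A B ε}

theorem hasDerivAt_perturbedEnergy (hB : (B : E →ₗ[ℝ] E).IsSymmetric) {e v : ℝ → E} {t : ℝ}
    (he : HasDerivAt e (v t) t) (hv : HasDerivAt v (-(A (v t) + B (e t))) t) :
    HasDerivAt (fun s => perturbedEnergy B ε (e s) (v s))
      (perturbedEnergyDeriv A B ε (e t) (v t)) t := by
  have hBe : HasDerivAt (fun s => B (e s)) (B (v t)) t := B.hasFDerivAt.comp_hasDerivAt t he
  refine ((hv.norm_sq.fun_add (he.inner ℝ hBe)).fun_add
    ((he.inner ℝ hv).const_mul ε)).congr_deriv ?_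
  have hsymm : ⟪e t, B (v t)⟫ = ⟪v t, B (e t)⟫ := by
    rw [real_inner_comm]; exact hB (v t) (e t)
  simp only [perturbedEnergyDeriv, inner_neg_right, inner_add_right, hsymm,
    real_inner_self_eq_norm_sq]
  ring

theorem perturbedEnergy_ge {β : ℝ} (hB : ∀ x, β * ‖x‖ ^ 2 ≤ ⟪x, B x⟫) (hε : 0 ≤ ε)
    (hε1 : ε ≤ 1) (hεβ : ε ≤ β) (u w : E) :
    ε / 2 * (‖u‖ ^ 2 + ‖w‖ ^ 2) ≤ perturbedEnergy B ε u w := by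
  have hcross : -(‖u‖ * ‖w‖) ≤ ⟪u, w⟫ := (abs_le.mp (abs_real_inner_le_norm u w)).1
  have hBu := hB u
  unfold perturbedEnergy
  nlinarith [sq_nonneg (‖u‖ - ‖w‖), mul_le_mul_of_nonneg_left hcross hε,
    sq_nonneg ‖u‖, sq_nonneg ‖w‖]

theorem perturbedEnergy_le (hε : 0 ≤ ε) (u w : E) :
    perturbedEnergy B ε u w ≤ (‖B‖ + 1 + ε) * (‖u‖ ^ 2 + ‖w‖ ^ 2) := by
  have hcross : ⟪u, w⟫ ≤ ‖u‖ * ‖w‖ := real_inner_le_norm u w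
  have hBu : ⟪u, B u⟫ ≤ ‖B‖ * ‖u‖ ^ 2 := by
    calc ⟪u, B u⟫ ≤ ‖u‖ * ‖B u‖ := real_inner_le_norm _ _
      _ ≤ ‖u‖ * (‖B‖ * ‖u‖) := by gcongr; exact B.le_opNorm u
      _ = ‖B‖ * ‖u‖ ^ 2 := by ring
  unfold perturbedEnergy
  nlinarith [sq_nonneg (‖u‖ - ‖w‖), mul_le_mul_of_nonneg_left hcross hε,
    sq_nonneg ‖u‖, sq_nonneg ‖w‖, norm_nonneg B]

theorem perturbedEnergyDeriv_le {α β : ℝ} (hβ : 0 < β) (hA : ∀ x, α * ‖x‖ ^ 2 ≤ ⟪x, A x⟫)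
    (hB : ∀ x, β * ‖x‖ ^ 2 ≤ ⟪x, B x⟫) (hε : 0 ≤ ε)
    (hεα : ε * (2 * β + ‖A‖ ^ 2) ≤ 2 * α * β) (u w : E) :
    perturbedEnergyDeriv A B ε u w ≤ -min α (ε * β / 2) * (‖u‖ ^ 2 + ‖w‖ ^ 2) := by
  have hAu : |⟪u, A w⟫| ≤ ‖A‖ * (‖u‖ * ‖w‖) := by
    calc |⟪u, A w⟫| ≤ ‖u‖ * ‖A w‖ := abs_real_inner_le_norm _ _
      _ ≤ ‖u‖ * (‖A‖ * ‖w‖) := by gcongr; exact A.le_opNorm w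
      _ = ‖A‖ * (‖u‖ * ‖w‖) := by ring
  have hyoung : 2 * β * (‖A‖ * (‖u‖ * ‖w‖)) ≤ β ^ 2 * ‖u‖ ^ 2 + ‖A‖ ^ 2 * ‖w‖ ^ 2 := by
    nlinarith [sq_nonneg (β * ‖u‖ - ‖A‖ * ‖w‖)]
  have hdecay : perturbedEnergyDeriv A B ε u w ≤ -α * ‖w‖ ^ 2 - ε * β / 2 * ‖u‖ ^ 2 := by
    refine le_of_mul_le_mul_left ?_ (by positivity : 0 < 2 * β)
    have hAw := hA w
    have hBu := hB u
    have hcross := neg_le_of_abs_le hAu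
    unfold perturbedEnergyDeriv
    nlinarith [mul_le_mul_of_nonneg_left hcross hε, mul_le_mul_of_nonneg_left hBu hε,
      mul_le_mul_of_nonneg_left hyoung hε, mul_le_mul_of_nonneg_right hεα (sq_nonneg ‖w‖)]
  have hminα := min_le_left α (ε * β / 2)
  have hminε := min_le_right α (ε * β / 2)
  nlinarith [mul_le_mul_of_nonneg_right hminα (sq_nonneg ‖w‖),
    mul_le_mul_of_nonneg_right hminε (sq_nonneg ‖u‖)]

variable {α β : ℝ} {e v : ℝ → E}

theorem exists_sq_norm_le_exp (hα : 0 < α) (hβ : 0 < β) (hA : ∀ x, α * ‖x‖ ^ 2 ≤ ⟪x, A x⟫)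
    (hB : ∀ x, β * ‖x‖ ^ 2 ≤ ⟪x, B x⟫) (hBsymm : (B : E →ₗ[ℝ] E).IsSymmetric)
    (he : ∀ t ≥ 0, HasDerivAt e (v t) t)
    (hv : ∀ t ≥ 0, HasDerivAt v (-(A (v t) + B (e t))) t) :
    ∃ K c, 0 < c ∧ ∀ t ≥ 0, ‖e t‖ ^ 2 + ‖v t‖ ^ 2 ≤ K * Real.exp (-c * t) := by
  obtain ⟨ε, hε, hε1, hεβ, hεα⟩ :
      ∃ ε > 0, ε ≤ 1 ∧ ε ≤ β ∧ ε * (2 * β + ‖A‖ ^ 2) ≤ 2 * α * β := by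
    refine ⟨min (min 1 β) (2 * α * β / (2 * β + ‖A‖ ^ 2)), by positivity,
      (min_le_left _ _).trans (min_le_left _ _), (min_le_left _ _).trans (min_le_right _ _), ?_⟩
    rw [← le_div_iff₀ (by positivity)]
    exact min_le_right _ _
  set V := fun t => perturbedEnergy B ε (e t) (v t)
  set m := min α (ε * β / 2)
  set C := ‖B‖ + 1 + ε
  have hm : 0 < m := lt_min hα (by positivity)
  have hC : 0 < C := by positivity
  have hV : ∀ t ≥ 0, V t ≤ V 0 * Real.exp (-(m / C) * t) := by
    refine fun t ht => le_mul_exp_of_hasDerivAt_le_neg_mul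
      (fun s hs => hasDerivAt_perturbedEnergy hBsymm (he s hs) (hv s hs)) (fun s _ => ?_) ht
    have hVC := perturbedEnergy_le (B := B) hε.le (e s) (v s)
    calc perturbedEnergyDeriv A B ε (e s) (v s) ≤ -m * (‖e s‖ ^ 2 + ‖v s‖ ^ 2) :=
          perturbedEnergyDeriv_le hβ hA hB hε.le hεα _ _
      _ ≤ -(m / C) * V s := by
          rw [neg_mul, neg_mul, neg_le_neg_iff, div_mul_eq_mul_div, div_le_iff₀ hC]
          nlinarith
  refine ⟨2 / ε * V 0, m / C, by positivity, fun t ht => ?_⟩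
  have hVε := perturbedEnergy_ge hB hε.le hε1 hεβ (e t) (v t)
  calc ‖e t‖ ^ 2 + ‖v t‖ ^ 2 ≤ 2 / ε * V t := by
        rw [div_mul_eq_mul_div, le_div_iff₀ hε]; linarith
    _ ≤ 2 / ε * (V 0 * Real.exp (-(m / C) * t)) := by gcongr; exact hV t ht
    _ = 2 / ε * V 0 * Real.exp (-(m / C) * t) := by ring

theorem tendsto_zero (hα : 0 < α) (hβ : 0 < β) (hA : ∀ x, α * ‖x‖ ^ 2 ≤ ⟪x, A x⟫)
    (hB : ∀ x, β * ‖x‖ ^ 2 ≤ ⟪x, B x⟫) (hBsymm : (B : E →ₗ[ℝ] E).IsSymmetric)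
    (he : ∀ t ≥ 0, HasDerivAt e (v t) t)
    (hv : ∀ t ≥ 0, HasDerivAt v (-(A (v t) + B (e t))) t) :
    Tendsto e atTop (𝓝 0) ∧ Tendsto v atTop (𝓝 0) := by
  obtain ⟨K, c, hc, hbound⟩ := exists_sq_norm_le_exp hα hβ hA hB hBsymm he hv
  have hexp : Tendsto (fun t => K * Real.exp (-c * t)) atTop (𝓝 0) := by
    simpa using (Real.tendsto_exp_atBot.comp
      (tendsto_id.const_mul_atTop_of_neg (neg_neg_of_pos hc))).const_mul K
  constructor <;> refine tendsto_zero_of_sq_norm_le ?_ hexp <;>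
    filter_upwards [eventually_ge_atTop 0] with t ht <;>
    linarith [hbound t ht, sq_nonneg ‖e t‖, sq_nonneg ‖v t‖]

theorem tendsto_zero_of_matrix {n : Type*} [Fintype n] [DecidableEq n] {A B : Matrix n n ℝ}
    (hA : ∀ x, x ≠ 0 → 0 < x ⬝ᵥ A *ᵥ x) (hB : ∀ x, x ≠ 0 → 0 < x ⬝ᵥ B *ᵥ x)
    (hBsymm : B.IsSymm) {e v : ℝ → n → ℝ} (he : ∀ t ≥ 0, HasDerivAt e (v t) t)
    (hv : ∀ t ≥ 0, HasDerivAt v (-(A *ᵥ v t + B *ᵥ e t)) t) :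
    Tendsto e atTop (𝓝 0) ∧ Tendsto v atTop (𝓝 0) := by
  set L := (EuclideanSpace.equiv n ℝ).symm
  have hpos : ∀ M : Matrix n n ℝ, (∀ x, x ≠ 0 → 0 < x ⬝ᵥ M *ᵥ x) →
      ∀ x, x ≠ 0 → 0 < ⟪x, toEuclideanCLM (𝕜 := ℝ) M x⟫ := fun M hM x hx => by
    rw [inner_toEuclideanCLM]
    exact hM _ (by simpa using hx)
  obtain ⟨α, hα, hAc⟩ :=
    (toEuclideanCLM (𝕜 := ℝ) A).exists_coercive_of_inner_map_self_pos (hpos A hA)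
  obtain ⟨β, hβ, hBc⟩ :=
    (toEuclideanCLM (𝕜 := ℝ) B).exists_coercive_of_inner_map_self_pos (hpos B hB)
  have hBsymm' : (toEuclideanCLM (𝕜 := ℝ) B : EuclideanSpace ℝ n →ₗ[ℝ] _).IsSymmetric := by
    rwa [coe_toEuclideanCLM_eq_toEuclideanLin, isSymmetric_toEuclideanLin_iff,
      isHermitian_iff_isSymm]
  have hlift := tendsto_zero hα hβ hAc hBc hBsymm' (e := fun t => L (e t))
    (v := fun t => L (v t)) (fun t ht => L.hasFDerivAt.comp_hasDerivAt t (he t ht))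
    -- `toEuclideanCLM M (L x) = L (M *ᵥ x)` holds by `rfl`
    (fun t ht => L.hasFDerivAt.comp_hasDerivAt t (hv t ht))
  have hback := L.symm.continuous.tendsto 0
  exact ⟨by simpa [Function.comp_def] using hback.comp hlift.1,
    by simpa [Function.comp_def] using hback.comp hlift.2⟩

end DampedOscillator

theorem stmt_0_general (k : ℕ) (A B : Matrix (Fin k) (Fin k) ℝ)
    (hBsymm : B.IsSymm)
    (hApd : ∀ x : Fin k → ℝ, x ≠ 0 → 0 < x ⬝ᵥ A.mulVec x)
    (hBpd : ∀ x : Fin k → ℝ, x ≠ 0 → 0 < x ⬝ᵥ B.mulVec x)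
    (e : ℝ → (Fin k → ℝ)) (he : ContDiff ℝ 2 e)
    (hode : ∀ t : ℝ, 0 ≤ t →
      deriv (deriv e) t + A.mulVec (deriv e t) + B.mulVec (e t) = 0) :
    Tendsto e atTop (nhds 0) ∧ Tendsto (deriv e) atTop (nhds 0) := by
  have he' : ContDiff ℝ 1 (deriv e) := he.iterate_deriv' 1 1
  refine DampedOscillator.tendsto_zero_of_matrix hApd hBpd hBsymm
    (fun t _ => (he.differentiable two_ne_zero t).hasDerivAt) (fun t ht => ?_)
  rw [← eq_neg_of_add_eq_zero_left (by rw [← add_assoc]; exact hode t ht)]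
  exact (he'.differentiable one_ne_zero t).hasDerivAt

/-- If `A, B` are symmetric positive definite `k × k` real matrices and
`e : ℝ → ℝ^k` is twice continuously differentiable with
`e'' + A e' + B e = 0` on `[0, ∞)`, then `e(t) → 0` and `e'(t) → 0` as `t → ∞`. -/
theorem stmt_0 (k : ℕ) (A B : Matrix (Fin k) (Fin k) ℝ)
    (hAsymm : A.IsSymm) (hBsymm : B.IsSymm)
    (hApd : ∀ x : Fin k → ℝ, x ≠ 0 → 0 < x ⬝ᵥ A.mulVec x)
    (hBpd : ∀ x : Fin k → ℝ, x ≠ 0 → 0 < x ⬝ᵥ B.mulVec x)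
    (e : ℝ → (Fin k → ℝ)) (he : ContDiff ℝ 2 e)
    (hode : ∀ t : ℝ, 0 ≤ t →
      deriv (deriv e) t + A.mulVec (deriv e t) + B.mulVec (e t) = 0) :
    Tendsto e atTop (nhds 0) ∧ Tendsto (deriv e) atTop (nhds 0) :=
  stmt_0_general k A B hBsymm hApd hBpd e he hode
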